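/- arXiv:1011.2470 — 2 statements merged into one kernel-verified Lean document; each statement's English description precedes it below -/
import Mathlib

section
/- For any positive integers a, b, the sum ∑_{d=1}^{∞} (ψ_{a,b} * μ)(d)/d equals ∏_{p|b}(1 - 1/p) · ∏_{p|a, p∤b, p≠2}(1 + 1/(p(p-2))). -/
open Finset

noncomputable def phiCirc (n : ℕ) : ℝ :=
  ∏ p ∈ n.primeFactors.erase 2, (1 - 1 / ((p : ℝ) - 1))

noncomputable def psiab (a b n : ℕ) : ℝ :=
  if Nat.gcd n b = 1 then (phiCirc (Nat.gcd a n))⁻¹ else 0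

/-- Dirichlet convolution of `ψ_{a,b}` with the Möbius function. -/
noncomputable def psiMu (a b n : ℕ) : ℝ :=
  ∑ d ∈ n.divisors, psiab a b (n / d) * (ArithmeticFunction.moebius d : ℝ)

/-!
`ψ_{a,b}` is multiplicative and takes the same value on `p, p², p³, …`, so `g = ψ_{a,b} * μ`
is multiplicative, vanishes on `p^k` for `k ≥ 2`, and `g(p) = ψ_{a,b}(p) - 1`, which is `0`
unless `p ∣ ab`. Hence `g(d)/d` is supported on the divisors of the radical of `ab`, and the
series is the Euler product `∏_{p ∣ ab} (1 + (ψ_{a,b}(p) - 1)/p)`. Its factor is `1 - 1/p` for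
`p ∣ b`, and `1 + 1/(p(p-2))` for `p ∣ a`, `p ∤ b`, `p ≠ 2`, since `1/φ°(p) = (p-1)/(p-2)`.
-/

open ArithmeticFunction
open scoped ArithmeticFunction.Moebius

namespace ArithmeticFunction

variable {R : Type*}

theorem mul_moebius_apply_prime_pow_succ [CommRing R] (f : ArithmeticFunction R) {p : ℕ}
    (hp : p.Prime) (k : ℕ) :
    (f * (μ : ArithmeticFunction R)) (p ^ (k + 1)) = f (p ^ (k + 1)) - f (p ^ k) := by
  rw [mul_comm, mul_apply,
    Nat.sum_divisorsAntidiagonal fun x y => (μ : ArithmeticFunction R) x * f y,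
    Nat.sum_divisors_prime_pow hp, sum_range_succ', sum_range_succ', sum_eq_zero fun i _ => by
      rw [intCoe_apply, moebius_apply_prime_pow hp (by omega), if_neg (by omega), Int.cast_zero,
        zero_mul]]
  rw [pow_one, pow_succ, Nat.mul_div_cancel _ hp.pos, intCoe_apply, intCoe_apply,
    moebius_apply_prime hp]
  simp only [pow_zero, moebius_apply_one, Nat.div_one]
  push_cast
  ring

theorem IsMultiplicative.squarefree_of_apply_ne_zero [CommMonoidWithZero R]
    {f : ArithmeticFunction R} (hf : f.IsMultiplicative) {n d : ℕ} (hn : n ≠ 0)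
    (hf_pow : ∀ p k, p.Prime → 2 ≤ k → f (p ^ k) = 0)
    (hf_prime : ∀ p, p.Prime → ¬ p ∣ n → f p = 0) (hd : f d ≠ 0) :
    Squarefree d ∧ d.primeFactors ⊆ n.primeFactors := by
  have hd0 : d ≠ 0 := by rintro rfl; exact hd f.map_zero
  have hfactor : ∀ p ∈ d.primeFactors, f (p ^ d.factorization p) ≠ 0 := by
    rw [hf.multiplicative_factorization f hd0, Finsupp.prod] at hd
    exact fun p hp => ne_zero_of_dvd_ne_zero hd (dvd_prod_of_mem _ (by simpa using hp))
  have hexp : ∀ p ∈ d.primeFactors, d.factorization p = 1 := fun p hp => by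
    have hpos := Finsupp.mem_support_iff.mp (Nat.support_factorization d ▸ hp)
    by_contra h
    exact hfactor p hp (hf_pow p _ (Nat.prime_of_mem_primeFactors hp) (by omega))
  refine ⟨(Nat.squarefree_iff_factorization_le_one hd0).mpr fun p => ?_, fun p hp => ?_⟩
  · by_cases hp : p ∈ d.primeFactors
    · exact (hexp p hp).le
    · rw [← Nat.support_factorization, Finsupp.notMem_support_iff] at hp
      simp [hp]
  · have hpp := Nat.prime_of_mem_primeFactors hp
    have hfp := hfactor p hp
    rw [hexp p hp, pow_one] at hfp
    exact Nat.mem_primeFactors.mpr ⟨hpp, not_not.mp fun h => hfp (hf_prime p hpp h), hn⟩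

theorem IsMultiplicative.tsum_eq_prod_primeFactors [CommSemiring R] [TopologicalSpace R]
    {f : ArithmeticFunction R} (hf : f.IsMultiplicative) {n : ℕ} (hn : n ≠ 0)
    (hf_pow : ∀ p k, p.Prime → 2 ≤ k → f (p ^ k) = 0)
    (hf_prime : ∀ p, p.Prime → ¬ p ∣ n → f p = 0) :
    ∑' d, f d = ∏ p ∈ n.primeFactors, (1 + f p) := by
  set N := ∏ p ∈ n.primeFactors, p
  have hN : Squarefree N :=
    squarefree_prod_of_pairwise_isCoprime
      (fun p hp q hq hpq => Nat.coprime_iff_isRelPrime.mp <|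
        (Nat.coprime_primes (Nat.prime_of_mem_primeFactors hp)
          (Nat.prime_of_mem_primeFactors hq)).mpr hpq)
      fun p hp => (Nat.prime_of_mem_primeFactors hp).squarefree
  rw [← Nat.primeFactors_prod_primeFactors n, hf.prodPrimeFactors_one_add_of_squarefree hN]
  refine tsum_eq_sum fun d hd => not_not.mp fun hfd => hd ?_
  obtain ⟨hd_sq, hd_sub⟩ := hf.squarefree_of_apply_ne_zero hn hf_pow hf_prime hfd
  rw [← Nat.prod_primeFactors_of_squarefree hd_sq]
  exact Nat.mem_divisors.mpr ⟨prod_dvd_prod_of_subset _ _ _ hd_sub, hN.ne_zero⟩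

end ArithmeticFunction

lemma phiCirc_one : phiCirc 1 = 1 := by
  simp [phiCirc]

lemma phiCirc_two : phiCirc 2 = 1 := by
  simp [phiCirc, Nat.prime_two.primeFactors]

lemma phiCirc_prime {p : ℕ} (hp : p.Prime) (hp2 : p ≠ 2) :
    phiCirc p = 1 - 1 / ((p : ℝ) - 1) := by
  rw [phiCirc, hp.primeFactors, erase_eq_of_notMem (by simpa using hp2.symm), prod_singleton]

lemma phiCirc_mul {m n : ℕ} (hm : m ≠ 0) (hn : n ≠ 0) (h : m.Coprime n) :
    phiCirc (m * n) = phiCirc m * phiCirc n := by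
  rw [phiCirc, Nat.primeFactors_mul hm hn, erase_union_distrib,
    prod_union (h.disjoint_primeFactors.mono (erase_subset _ _) (erase_subset _ _))]
  rfl

lemma phiCirc_gcd_prime_pow {a p : ℕ} (ha : a ≠ 0) (hp : p.Prime) {k : ℕ} (hk : k ≠ 0) :
    phiCirc (a.gcd (p ^ k)) = phiCirc (a.gcd p) := by
  rw [phiCirc, phiCirc, Nat.primeFactors_gcd ha (pow_ne_zero _ hp.ne_zero),
    Nat.primeFactors_gcd ha hp.ne_zero, Nat.primeFactors_pow _ hk]

lemma psiab_one (a b : ℕ) : psiab a b 1 = 1 := by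
  simp [psiab, phiCirc_one]

lemma psiab_mul (a b : ℕ) {m n : ℕ} (hm : m ≠ 0) (hn : n ≠ 0) (h : m.Coprime n) :
    psiab a b (m * n) = psiab a b m * psiab a b n := by
  simp only [psiab, ← Nat.coprime_iff_gcd_eq_one, ite_zero_mul_ite_zero,
    Nat.coprime_mul_iff_left]
  rw [h.gcd_mul a, phiCirc_mul (Nat.gcd_ne_zero_right hm) (Nat.gcd_ne_zero_right hn)
    (h.gcd_both a a), mul_inv]

lemma psiab_prime_pow {a : ℕ} (b : ℕ) (ha : a ≠ 0) {p : ℕ} (hp : p.Prime) {k : ℕ}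
    (hk : k ≠ 0) :
    psiab a b (p ^ k) = psiab a b p := by
  simp only [psiab, ← Nat.coprime_iff_gcd_eq_one,
    Nat.coprime_pow_left_iff (Nat.pos_of_ne_zero hk), phiCirc_gcd_prime_pow ha hp hk]

lemma psiab_prime_of_dvd_right (a : ℕ) {b p : ℕ} (hp : p.Prime) (hpb : p ∣ b) :
    psiab a b p = 0 :=
  if_neg (by rw [Nat.gcd_eq_left hpb]; exact hp.ne_one)

lemma psiab_prime_of_dvd_left {a b p : ℕ} (hp : p.Prime) (hpa : p ∣ a) (hpb : ¬ p ∣ b) :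
    psiab a b p = (phiCirc p)⁻¹ := by
  rw [psiab, if_pos ((Nat.Prime.coprime_iff_not_dvd hp).mpr hpb), Nat.gcd_eq_right hpa]

lemma psiab_prime_of_not_dvd_mul {a b p : ℕ} (hp : p.Prime) (hpab : ¬ p ∣ a * b) :
    psiab a b p = 1 := by
  obtain ⟨hpa, hpb⟩ := not_or.mp ((not_congr hp.dvd_mul).mp hpab)
  rw [psiab, if_pos (hp.coprime_iff_not_dvd.mpr hpb),
    Nat.Coprime.gcd_eq_one (hp.coprime_iff_not_dvd.mpr hpa).symm, phiCirc_one, inv_one]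

-- At `p = 2` both sides are `1`, the right one because `1 / 0 = 0`.
lemma one_add_inv_phiCirc_sub_one_div {p : ℕ} (hp : p.Prime) :
    1 + ((phiCirc p)⁻¹ - 1) / p = 1 + 1 / ((p : ℝ) * ((p : ℝ) - 2)) := by
  rcases eq_or_ne p 2 with rfl | hp2
  · norm_num [phiCirc_two]
  have hp3 : (3 : ℝ) ≤ p := by exact_mod_cast (hp.two_le.lt_of_ne' hp2 : 2 < p)
  have h1 : (p : ℝ) - 1 ≠ 0 := by linarith
  have h2 : (p : ℝ) - 2 ≠ 0 := by linarith
  have hphi : phiCirc p = ((p : ℝ) - 2) / ((p : ℝ) - 1) := by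
    rw [phiCirc_prime hp hp2]
    field_simp
    ring
  rw [hphi, inv_div]
  field_simp
  ring

noncomputable def psiabArith (a b : ℕ) : ArithmeticFunction ℝ :=
  ⟨fun n => if n = 0 then 0 else psiab a b n, if_pos rfl⟩

lemma psiabArith_apply (a b : ℕ) {n : ℕ} (hn : n ≠ 0) : psiabArith a b n = psiab a b n :=
  if_neg hn

lemma isMultiplicative_psiabArith (a b : ℕ) : (psiabArith a b).IsMultiplicative := by
  rw [IsMultiplicative.iff_ne_zero]
  refine ⟨by rw [psiabArith_apply a b one_ne_zero, psiab_one], fun hm hn h => ?_⟩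
  rw [psiabArith_apply a b (mul_ne_zero hm hn), psiabArith_apply a b hm, psiabArith_apply a b hn,
    psiab_mul a b hm hn h]

lemma psiMu_eq_mul_moebius (a b : ℕ) :
    psiMu a b = ⇑(psiabArith a b * (μ : ArithmeticFunction ℝ)) := by
  funext n
  rcases eq_or_ne n 0 with rfl | hn
  · simp [psiMu]
  rw [psiMu, mul_apply,
    Nat.sum_divisorsAntidiagonal' fun x y => psiabArith a b x * (μ : ArithmeticFunction ℝ) y]
  refine sum_congr rfl fun d hd => ?_
  have hnd : n / d ≠ 0 := (Nat.div_ne_zero_iff_of_dvd (Nat.dvd_of_mem_divisors hd)).mpr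
    ⟨hn, (Nat.pos_of_mem_divisors hd).ne'⟩
  rw [psiabArith_apply a b hnd, intCoe_apply]

lemma psiabArith_mul_moebius_apply_prime (a b : ℕ) {p : ℕ} (hp : p.Prime) :
    (psiabArith a b * (μ : ArithmeticFunction ℝ)) p = psiab a b p - 1 := by
  have := mul_moebius_apply_prime_pow_succ (psiabArith a b) hp 0
  rwa [zero_add, pow_one, pow_zero, psiabArith_apply a b hp.ne_zero,
    psiabArith_apply a b one_ne_zero, psiab_one] at this

lemma psiabArith_mul_moebius_apply_prime_pow {a : ℕ} (b : ℕ) (ha : a ≠ 0) {p k : ℕ}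
    (hp : p.Prime) (hk : 2 ≤ k) :
    (psiabArith a b * (μ : ArithmeticFunction ℝ)) (p ^ k) = 0 := by
  obtain ⟨k, rfl⟩ := Nat.exists_eq_add_of_le' hk
  rw [mul_moebius_apply_prime_pow_succ _ hp, psiabArith_apply a b (pow_ne_zero _ hp.ne_zero),
    psiabArith_apply a b (pow_ne_zero _ hp.ne_zero), psiab_prime_pow b ha hp (by omega),
    psiab_prime_pow b ha hp (by omega), sub_self]

lemma prod_primeFactors_mul_one_add_psiab_sub_one_div {a b : ℕ} (ha : a ≠ 0) (hb : b ≠ 0) :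
    ∏ p ∈ (a * b).primeFactors, (1 + (psiab a b p - 1) / p) =
      (∏ p ∈ b.primeFactors, (1 - 1 / (p : ℝ))) *
        ∏ p ∈ (a.primeFactors \ b.primeFactors).erase 2,
          (1 + 1 / ((p : ℝ) * ((p : ℝ) - 2))) := by
  rw [Nat.primeFactors_mul ha hb, union_comm, ← union_sdiff_self_eq_union,
    prod_union disjoint_sdiff, prod_erase _ (by norm_num)]
  congr 1 <;> refine prod_congr rfl fun p hp => ?_
  · rw [psiab_prime_of_dvd_right a (Nat.prime_of_mem_primeFactors hp)
      (Nat.dvd_of_mem_primeFactors hp)]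
    ring
  · obtain ⟨hpa, hpb⟩ := mem_sdiff.mp hp
    have hp' := Nat.prime_of_mem_primeFactors hpa
    rw [psiab_prime_of_dvd_left hp' (Nat.dvd_of_mem_primeFactors hpa)
      fun h => hpb (Nat.mem_primeFactors.mpr ⟨hp', h, hb⟩), one_add_inv_phiCirc_sub_one_div hp']

theorem stmt_2 (a b : ℕ) (ha : 0 < a) (hb : 0 < b) :
    ∑' d : ℕ, psiMu a b d / (d : ℝ) =
      (∏ p ∈ b.primeFactors, (1 - 1 / (p : ℝ))) *
        ∏ p ∈ (a.primeFactors \ b.primeFactors).erase 2,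
          (1 + 1 / ((p : ℝ) * ((p : ℝ) - 2))) := by
  set H := (psiabArith a b * (μ : ArithmeticFunction ℝ)).pdiv
    (ArithmeticFunction.id : ArithmeticFunction ℝ)
  have hH : H.IsMultiplicative :=
    ((isMultiplicative_psiabArith a b).mul isMultiplicative_moebius.intCast).pdiv
      isMultiplicative_id.natCast
  have hH_prime : ∀ p, p.Prime → H p = (psiab a b p - 1) / p := fun p hp => by
    rw [pdiv_apply, psiabArith_mul_moebius_apply_prime a b hp, natCoe_apply, id_apply]
  have hH_pow : ∀ p k, p.Prime → 2 ≤ k → H (p ^ k) = 0 := fun p k hp hk => by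
    rw [pdiv_apply, psiabArith_mul_moebius_apply_prime_pow b ha.ne' hp hk, zero_div]
  have hH_coprime : ∀ p, p.Prime → ¬ p ∣ a * b → H p = 0 := fun p hp hpab => by
    rw [hH_prime p hp, psiab_prime_of_not_dvd_mul hp hpab, sub_self, zero_div]
  have hsummand : (fun d : ℕ => psiMu a b d / d) = H := by
    funext d
    rw [psiMu_eq_mul_moebius, pdiv_apply, natCoe_apply, id_apply]
  rw [hsummand, hH.tsum_eq_prod_primeFactors (mul_ne_zero ha.ne' hb.ne') hH_pow hH_coprime,
    ← prod_primeFactors_mul_one_add_psiab_sub_one_div ha.ne' hb.ne']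
  exact prod_congr rfl fun p hp => by rw [hH_prime p (Nat.prime_of_mem_primeFactors hp)]
end

section
/- Let h(u₂, t₇, t₆) = max{t₆, t₇, t₇|t₇ − t₆u₂|, |t₇ − t₆u₂|·|t₆ + t₇u₂|} and D_h = {(u₂,t₇,t₆) ∈ ℝ³ : t₆,t₇ > 0, h(u₂,t₇,t₆) ≤ 1}. Then for any Z₆ > 0, meas{(u₂,t₇,t₆) ∈ D_h : t₆Z₆ < 1} ≪ Z₆^{-1/2}, and analogously meas{(u₂,t₇,t₆) ∈ D_h : t₇Z₇ < 1} ≪ Z₇^{-1/2} for any Z₇ > 0. -/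
open MeasureTheory

noncomputable def hfun (u₂ t₇ t₆ : ℝ) : ℝ :=
  max (max t₆ t₇) (max (t₇ * |t₇ - t₆ * u₂|) (|t₇ - t₆ * u₂| * |t₆ + t₇ * u₂|))

def Dh : Set (ℝ × ℝ × ℝ) :=
  {p | 0 < p.2.2 ∧ 0 < p.2.1 ∧ hfun p.1 p.2.1 p.2.2 ≤ 1}

/-
For fixed `t₆, t₇ > 0` we have `|t₇ - t₆ u| |t₆ + t₇ u| = t₆ t₇ |u - t₇/t₆| |u + t₆/t₇|`, so the
condition `h ≤ 1` forces `u` within `(t₆ t₇)^(-1/2)` of one of the two roots `t₇/t₆`, `-t₆/t₇`.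
The `u`-slice therefore has length at most `4 (t₆ t₇)^(-1/2)`, and integrating over
`0 < t₆ ≤ a`, `0 < t₇ ≤ b` bounds the volume by `16 √a √b`. Since `t₆, t₇ ≤ 1` on `D_h`, taking
`a = Z₆⁻¹, b = 1` (resp. `a = 1, b = Z₇⁻¹`) gives the claim.
-/

open Set

lemma abs_sub_le_or_abs_sub_le_of_mul_le_sq {K : Type*} [Field K] [LinearOrder K]
    [IsStrictOrderedRing K] {x c d r : K} (hr : 0 ≤ r) (h : |x - c| * |x - d| ≤ r ^ 2) :
    |x - c| ≤ r ∨ |x - d| ≤ r := by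
  by_contra! hlt
  exact (mul_lt_mul'' hlt.1 hlt.2 hr hr).not_ge (sq r ▸ h)

lemma volume_setOf_abs_sub_mul_abs_sub_le (c d : ℝ) {r : ℝ} (hr : 0 ≤ r) :
    volume {x : ℝ | |x - c| * |x - d| ≤ r ^ 2} ≤ ENNReal.ofReal (4 * r) := by
  have hsub : {x : ℝ | |x - c| * |x - d| ≤ r ^ 2} ⊆
      Metric.closedBall c r ∪ Metric.closedBall d r := fun x hx =>
    abs_sub_le_or_abs_sub_le_of_mul_le_sq hr hx
  calc volume {x : ℝ | |x - c| * |x - d| ≤ r ^ 2}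
      ≤ volume (Metric.closedBall c r) + volume (Metric.closedBall d r) :=
        (measure_mono hsub).trans (measure_union_le _ _)
    _ = ENNReal.ofReal (4 * r) := by
        rw [Real.volume_closedBall, Real.volume_closedBall, ← ENNReal.ofReal_add (by positivity)
          (by positivity)]
        ring_nf

lemma lintegral_Ioc_zero_rpow {r : ℝ} (hr : -1 < r) {a : ℝ} (ha : 0 ≤ a) :
    ∫⁻ t in Ioc 0 a, ENNReal.ofReal (t ^ r) = ENNReal.ofReal (a ^ (r + 1) / (r + 1)) := by
  have hint : IntegrableOn (fun t : ℝ => t ^ r) (Ioc 0 a) :=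
    (intervalIntegrable_iff_integrableOn_Ioc_of_le ha).1
      (intervalIntegral.intervalIntegrable_rpow' hr)
  rw [← ofReal_integral_eq_lintegral_ofReal hint
      (ae_restrict_of_forall_mem measurableSet_Ioc fun t ht => Real.rpow_nonneg ht.1.le r),
    ← intervalIntegral.integral_of_le ha, integral_rpow (Or.inl hr),
    Real.zero_rpow (by linarith), sub_zero]

lemma rpow_neg_half_sq {t : ℝ} (ht : 0 ≤ t) : (t ^ (-(1 / 2) : ℝ)) ^ 2 = t⁻¹ := by
  rw [← Real.rpow_natCast, ← Real.rpow_mul ht]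
  norm_num [Real.rpow_neg_one]

lemma volume_setOf_abs_mul_abs_le_one {t₆ t₇ : ℝ} (h₆ : 0 < t₆) (h₇ : 0 < t₇) :
    volume {u : ℝ | |t₇ - t₆ * u| * |t₆ + t₇ * u| ≤ 1} ≤
      ENNReal.ofReal (4 * t₇ ^ (-(1 / 2) : ℝ) * t₆ ^ (-(1 / 2) : ℝ)) := by
  set r := t₇ ^ (-(1 / 2) : ℝ) * t₆ ^ (-(1 / 2) : ℝ)
  have hsub : {u : ℝ | |t₇ - t₆ * u| * |t₆ + t₇ * u| ≤ 1} ⊆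
      {u | |u - t₇ / t₆| * |u - -(t₆ / t₇)| ≤ r ^ 2} := by
    intro u hu
    have hfactor : |t₇ - t₆ * u| * |t₆ + t₇ * u| = t₆ * t₇ * (|u - t₇ / t₆| * |u - -(t₆ / t₇)|) := by
      rw [show t₇ - t₆ * u = -(t₆ * (u - t₇ / t₆)) by field_simp; ring,
        show t₆ + t₇ * u = t₇ * (u - -(t₆ / t₇)) by field_simp; ring,
        abs_neg, abs_mul, abs_mul, abs_of_pos h₆, abs_of_pos h₇]
      ring
    rw [mem_ofPred_eq, hfactor] at hu
    rw [mem_ofPred_eq, mul_pow, rpow_neg_half_sq h₇.le, rpow_neg_half_sq h₆.le, ← mul_inv,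
      mul_comm t₇, ← mul_one (t₆ * t₇)⁻¹, le_inv_mul_iff₀ (by positivity)]
    exact hu
  calc volume {u : ℝ | |t₇ - t₆ * u| * |t₆ + t₇ * u| ≤ 1}
      ≤ ENNReal.ofReal (4 * r) :=
        (measure_mono hsub).trans (volume_setOf_abs_sub_mul_abs_sub_le _ _ (by positivity))
    _ = _ := by rw [mul_assoc]

def productSublevel (a b : ℝ) : Set (ℝ × ℝ × ℝ) :=
  {p | p.2.1 ∈ Ioc 0 b ∧ p.2.2 ∈ Ioc 0 a ∧ |p.2.1 - p.2.2 * p.1| * |p.2.2 + p.2.1 * p.1| ≤ 1}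

lemma measurableSet_productSublevel (a b : ℝ) : MeasurableSet (productSublevel a b) := by
  unfold productSublevel
  measurability

lemma volume_productSublevel_le {a b : ℝ} (ha : 0 ≤ a) (hb : 0 ≤ b) :
    volume (productSublevel a b) ≤
      ENNReal.ofReal (16 * a ^ (1 / 2 : ℝ) * b ^ (1 / 2 : ℝ)) := by
  set R : Set (ℝ × ℝ) := Ioc 0 b ×ˢ Ioc 0 a
  have hR : MeasurableSet R := measurableSet_Ioc.prod measurableSet_Ioc
  have hslice : ∀ y : ℝ × ℝ, volume ((fun u => (u, y)) ⁻¹' productSublevel a b) ≤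
      R.indicator (fun y => ENNReal.ofReal (4 * y.1 ^ (-(1 / 2) : ℝ)) *
        ENNReal.ofReal (y.2 ^ (-(1 / 2) : ℝ))) y := by
    rintro ⟨t₇, t₆⟩
    by_cases hy : (t₇, t₆) ∈ R
    · have h₇ : 0 < t₇ := hy.1.1
      rw [indicator_of_mem hy, ← ENNReal.ofReal_mul (by positivity)]
      exact measure_mono (fun u hu => hu.2.2) |>.trans
        (volume_setOf_abs_mul_abs_le_one hy.2.1 hy.1.1)
    · have hempty : (fun u => (u, (t₇, t₆))) ⁻¹' productSublevel a b = ∅ :=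
        eq_empty_of_forall_notMem fun u hu => hy ⟨hu.1, hu.2.1⟩
      rw [indicator_of_notMem hy, hempty, measure_empty]
  rw [Measure.volume_eq_prod, Measure.prod_apply_symm (measurableSet_productSublevel a b)]
  calc ∫⁻ y, volume ((fun u => (u, y)) ⁻¹' productSublevel a b)
      ≤ ∫⁻ y in R, ENNReal.ofReal (4 * y.1 ^ (-(1 / 2) : ℝ)) *
          ENNReal.ofReal (y.2 ^ (-(1 / 2) : ℝ)) := by
        rw [← lintegral_indicator hR]
        exact lintegral_mono hslice
    _ = (∫⁻ t₇ in Ioc 0 b, ENNReal.ofReal (4 * t₇ ^ (-(1 / 2) : ℝ))) *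
          ∫⁻ t₆ in Ioc 0 a, ENNReal.ofReal (t₆ ^ (-(1 / 2) : ℝ)) := by
        rw [Measure.volume_eq_prod, ← Measure.prod_restrict]
        exact lintegral_prod_mul (f := fun t₇ => ENNReal.ofReal (4 * t₇ ^ (-(1 / 2) : ℝ)))
          (g := fun t₆ => ENNReal.ofReal (t₆ ^ (-(1 / 2) : ℝ))) (by fun_prop) (by fun_prop)
    _ = ENNReal.ofReal (16 * a ^ (1 / 2 : ℝ) * b ^ (1 / 2 : ℝ)) := by
        have hexp : (-(1 / 2) : ℝ) + 1 = 1 / 2 := by norm_num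
        simp_rw [ENNReal.ofReal_mul (by norm_num : (0 : ℝ) ≤ 4)]
        rw [lintegral_const_mul' _ _ ENNReal.ofReal_ne_top, lintegral_Ioc_zero_rpow (by norm_num) ha,
          lintegral_Ioc_zero_rpow (by norm_num) hb, hexp, ← ENNReal.ofReal_mul (by norm_num),
          ← ENNReal.ofReal_mul (by positivity)]
        congr 1
        ring

lemma Dh_snd_le_one {p : ℝ × ℝ × ℝ} (hp : p ∈ Dh) : p.2.2 ≤ 1 ∧ p.2.1 ≤ 1 :=
  max_le_iff.1 (max_le_iff.1 hp.2.2).1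

lemma sep_Dh_subset_productSublevel (a b : ℝ) :
    {p ∈ Dh | p.2.2 ≤ a ∧ p.2.1 ≤ b} ⊆ productSublevel a b :=
  fun _ ⟨⟨h₆, h₇, hh⟩, ha, hb⟩ => ⟨⟨h₇, hb⟩, ⟨h₆, ha⟩, (max_le_iff.1 (max_le_iff.1 hh).2).2⟩

lemma toReal_volume_le_of_subset_sep_Dh {s : Set (ℝ × ℝ × ℝ)} {a b : ℝ} (ha : 0 ≤ a)
    (hb : 0 ≤ b) (hs : s ⊆ {p ∈ Dh | p.2.2 ≤ a ∧ p.2.1 ≤ b}) :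
    (volume s).toReal ≤ 16 * a ^ (1 / 2 : ℝ) * b ^ (1 / 2 : ℝ) :=
  ENNReal.toReal_le_of_le_ofReal (by positivity) <| (measure_mono
    (hs.trans (sep_Dh_subset_productSublevel a b))).trans (volume_productSublevel_le ha hb)

lemma le_inv_of_mul_lt_one {K : Type*} [Field K] [LinearOrder K] [IsStrictOrderedRing K]
    {t Z : K} (hZ : 0 < Z) (h : t * Z < 1) : t ≤ Z⁻¹ := by
  rw [← mul_one Z⁻¹, le_inv_mul_iff₀' hZ]
  exact h.le

theorem stmt_16 :
    ∃ C : ℝ, 0 < C ∧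
      (∀ Z₆ : ℝ, 0 < Z₆ →
        (volume {p ∈ Dh | p.2.2 * Z₆ < 1}).toReal ≤ C * Z₆ ^ (-(1 / 2 : ℝ))) ∧
      (∀ Z₇ : ℝ, 0 < Z₇ →
        (volume {p ∈ Dh | p.2.1 * Z₇ < 1}).toReal ≤ C * Z₇ ^ (-(1 / 2 : ℝ))) := by
  have hZ : ∀ Z : ℝ, 0 < Z → (Z⁻¹) ^ (1 / 2 : ℝ) = Z ^ (-(1 / 2 : ℝ)) := fun Z hZ => by
    rw [Real.inv_rpow hZ.le, Real.rpow_neg hZ.le]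
  refine ⟨16, by norm_num, fun Z₆ hZ₆ => ?_, fun Z₇ hZ₇ => ?_⟩
  · calc (volume {p ∈ Dh | p.2.2 * Z₆ < 1}).toReal
        ≤ 16 * Z₆⁻¹ ^ (1 / 2 : ℝ) * 1 ^ (1 / 2 : ℝ) :=
          toReal_volume_le_of_subset_sep_Dh (by positivity) zero_le_one fun p ⟨hp, hZ⟩ =>
            ⟨hp, le_inv_of_mul_lt_one hZ₆ hZ, (Dh_snd_le_one hp).2⟩
      _ = 16 * Z₆ ^ (-(1 / 2 : ℝ)) := by rw [Real.one_rpow, mul_one, hZ Z₆ hZ₆]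
  · calc (volume {p ∈ Dh | p.2.1 * Z₇ < 1}).toReal
        ≤ 16 * 1 ^ (1 / 2 : ℝ) * Z₇⁻¹ ^ (1 / 2 : ℝ) :=
          toReal_volume_le_of_subset_sep_Dh zero_le_one (by positivity) fun p ⟨hp, hZ⟩ =>
            ⟨hp, (Dh_snd_le_one hp).1, le_inv_of_mul_lt_one hZ₇ hZ⟩
      _ = 16 * Z₇ ^ (-(1 / 2 : ℝ)) := by rw [Real.one_rpow, mul_one, hZ Z₇ hZ₇]
end
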